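/- Key identity of the paper (equation gc.5, infinitesimal form at fixed t): let p, G : ℝ^{2n} → ℂ be smooth with all relevant products compactly supported, f : ℂ → ℝ smooth compactly supported. Then 2 Re( i ∫ (∂f/∂z)(p) · H_G p dxdξ ) = ∫ (Δf)(p) · {Re p, Im p} · Re G dxdξ. -/

import Mathlib

open Complex MeasureTheory
set_option linter.unusedSectionVars false

/-- Phase space `ℝ^{2n}` as pairs `(x, ξ)`. -/
abbrev Phase (n : ℕ) := (Fin n → ℝ) × (Fin n → ℝ)

/-- The complex-bilinear Poisson bracket; `H_G u = {G, u}`. -/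
noncomputable def poissonBracketC {n : ℕ} (p q : Phase n → ℂ) (ρ : Phase n) : ℂ :=
  ∑ j : Fin n,
    (fderiv ℝ p ρ (0, Pi.single j 1) * fderiv ℝ q ρ (Pi.single j 1, 0)
      - fderiv ℝ p ρ (Pi.single j 1, 0) * fderiv ℝ q ρ (0, Pi.single j 1))

/-- The real Poisson bracket. -/
noncomputable def poissonBracketR {n : ℕ} (p q : Phase n → ℝ) (ρ : Phase n) : ℝ :=
  ∑ j : Fin n,
    (fderiv ℝ p ρ (0, Pi.single j 1) * fderiv ℝ q ρ (Pi.single j 1, 0)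
      - fderiv ℝ p ρ (Pi.single j 1, 0) * fderiv ℝ q ρ (0, Pi.single j 1))

/-- Wirtinger derivative `∂F/∂z = (∂_x F − i ∂_y F)/2`. -/
noncomputable def wirtingerDz (F : ℂ → ℂ) (z : ℂ) : ℂ :=
  (fderiv ℝ F z 1 - Complex.I * fderiv ℝ F z Complex.I) / 2

/-- The Laplacian `Δf = ∂²f/∂x² + ∂²f/∂y²` on `ℂ ≅ ℝ²`. -/
noncomputable def laplacian (f : ℂ → ℝ) (z : ℂ) : ℝ :=
  fderiv ℝ (fun w => fderiv ℝ f w 1) z 1 +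
    fderiv ℝ (fun w => fderiv ℝ f w Complex.I) z Complex.I

/-! ### Auxiliary material -/

section Aux

instance phaseHaar (n : ℕ) : (volume : Measure (Phase n)).IsAddHaarMeasure :=
  Measure.prod.instIsAddHaarMeasure volume volume

variable {E : Type*} [NormedAddCommGroup E] [NormedSpace ℝ E] [MeasurableSpace E]
  [BorelSpace E] [FiniteDimensional ℝ E] {μ : Measure E} [μ.IsAddHaarMeasure]

variable {F : Type*} [NormedAddCommGroup F] [NormedSpace ℝ F]

/-- Continuity of the directional derivative of a smooth function. -/
lemma aux_cont_fderiv_apply (u : E → F) (hu : ContDiff ℝ (⊤ : ℕ∞) u) (v : E) :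
    Continuous fun x => fderiv ℝ u x v := by
  have h : Continuous (fderiv ℝ u) := hu.continuous_fderiv (by simp)
  exact (ContinuousLinearMap.apply ℝ F v).continuous.comp h

/-- Compact support of the directional derivative. -/
lemma aux_hcs_fderiv_apply {u : E → F} (hc : HasCompactSupport u) (v : E) :
    HasCompactSupport fun x => fderiv ℝ u x v :=
  hc.fderiv_apply ℝ v

/-- The integral of a directional derivative of a smooth compactly supported real
function vanishes. -/
lemma aux_integral_fderiv_real (u : E → ℝ) (hu : ContDiff ℝ (⊤ : ℕ∞) u)
    (hc : HasCompactSupport u) (v : E) : ∫ x, fderiv ℝ u x v ∂μ = 0 := by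
  obtain ⟨C, hC⟩ := hu.lipschitzWith_of_hasCompactSupport hc (by simp)
  have h := LipschitzWith.integral_lineDeriv_mul_eq (μ := μ)
    (LipschitzWith.const' (1 : ℝ) (K := 1)) hC hc v
  have h1 : ∀ x : E, lineDeriv ℝ (fun _ : E => (1:ℝ)) x v = 0 := fun x => by
    rw [(differentiableAt_const (1:ℝ)).lineDeriv_eq_fderiv, fderiv_fun_const]; simp
  have h2 : ∀ x : E, lineDeriv ℝ u x (-v) * (fun _ : E => (1:ℝ)) x = -fderiv ℝ u x v :=
    fun x => by
      rw [(hu.differentiable (by simp)).differentiableAt.lineDeriv_eq_fderiv]; simp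
  simp only [h1, zero_mul, integral_zero, h2] at h
  rw [integral_neg] at h
  linarith [h]

lemma aux_fderiv_re {u : E → ℂ} {x : E} (hu : DifferentiableAt ℝ u x) (v : E) :
    fderiv ℝ (fun y => (u y).re) x v = (fderiv ℝ u x v).re := by
  have : fderiv ℝ (fun y => Complex.reCLM (u y)) x = Complex.reCLM.comp (fderiv ℝ u x) :=
    (Complex.reCLM.hasFDerivAt.comp x hu.hasFDerivAt).fderiv
  simpa using congrFun (congrArg DFunLike.coe this) v

lemma aux_fderiv_im {u : E → ℂ} {x : E} (hu : DifferentiableAt ℝ u x) (v : E) :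
    fderiv ℝ (fun y => (u y).im) x v = (fderiv ℝ u x v).im := by
  have : fderiv ℝ (fun y => Complex.imCLM (u y)) x = Complex.imCLM.comp (fderiv ℝ u x) :=
    (Complex.imCLM.hasFDerivAt.comp x hu.hasFDerivAt).fderiv
  simpa using congrFun (congrArg DFunLike.coe this) v

lemma aux_fderiv_ofReal {g : E → ℝ} {x : E} (hg : DifferentiableAt ℝ g x) (v : E) :
    fderiv ℝ (fun y => ((g y : ℝ) : ℂ)) x v = ((fderiv ℝ g x v : ℝ) : ℂ) := by
  have : fderiv ℝ (fun y => Complex.ofRealCLM (g y)) x =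
      Complex.ofRealCLM.comp (fderiv ℝ g x) :=
    (Complex.ofRealCLM.hasFDerivAt.comp x hg.hasFDerivAt).fderiv
  simpa using congrFun (congrArg DFunLike.coe this) v

/-- The integral of a directional derivative of a smooth compactly supported complex
function vanishes. -/
lemma aux_integral_fderiv_complex (u : E → ℂ) (hu : ContDiff ℝ (⊤ : ℕ∞) u)
    (hc : HasCompactSupport u) (v : E) : ∫ x, fderiv ℝ u x v ∂μ = 0 := by
  have hdu : Differentiable ℝ u := hu.differentiable (by simp)
  have hre : ContDiff ℝ (⊤ : ℕ∞) fun x => (u x).re := Complex.reCLM.contDiff.comp hu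
  have him : ContDiff ℝ (⊤ : ℕ∞) fun x => (u x).im := Complex.imCLM.contDiff.comp hu
  have hcre : HasCompactSupport fun x => (u x).re := hc.comp_left (g := Complex.re) rfl
  have hcim : HasCompactSupport fun x => (u x).im := hc.comp_left (g := Complex.im) rfl
  have i1 : Integrable (fun x => fderiv ℝ (fun y => (u y).re) x v) μ :=
    (aux_cont_fderiv_apply _ hre v).integrable_of_hasCompactSupport
      (aux_hcs_fderiv_apply hcre v)
  have i2 : Integrable (fun x => fderiv ℝ (fun y => (u y).im) x v) μ :=
    (aux_cont_fderiv_apply _ him v).integrable_of_hasCompactSupport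
      (aux_hcs_fderiv_apply hcim v)
  have hInt : Integrable (fun x => fderiv ℝ u x v) μ :=
    (aux_cont_fderiv_apply _ hu v).integrable_of_hasCompactSupport
      (aux_hcs_fderiv_apply hc v)
  apply Complex.ext
  · have := Complex.reCLM.integral_comp_comm hInt
    simp only [Complex.reCLM_apply] at this
    rw [← this]
    rw [show (fun x => ((fderiv ℝ u x) v).re) = fun x => fderiv ℝ (fun y => (u y).re) x v from
      funext fun x => (aux_fderiv_re (hdu x) v).symm] at this ⊢
    rw [aux_integral_fderiv_real _ hre hcre]
    simp
  · have := Complex.imCLM.integral_comp_comm hInt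
    simp only [Complex.imCLM_apply] at this
    rw [← this]
    rw [show (fun x => ((fderiv ℝ u x) v).im) = fun x => fderiv ℝ (fun y => (u y).im) x v from
      funext fun x => (aux_fderiv_im (hdu x) v).symm] at this ⊢
    rw [aux_integral_fderiv_real _ him hcim]
    simp

/-- Integration by parts. -/
lemma aux_ibp (a b : E → ℂ) (ha : ContDiff ℝ (⊤ : ℕ∞) a) (hb : ContDiff ℝ (⊤ : ℕ∞) b)
    (hac : HasCompactSupport a) (v : E) :
    ∫ x, fderiv ℝ a x v * b x ∂μ = -∫ x, a x * fderiv ℝ b x v ∂μ := by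
  have hda : Differentiable ℝ a := ha.differentiable (by simp)
  have hdb : Differentiable ℝ b := hb.differentiable (by simp)
  have habc : HasCompactSupport fun x => a x * b x := hac.mul_right
  have key : ∀ x : E, fderiv ℝ (fun y => a y * b y) x v
      = fderiv ℝ a x v * b x + a x * fderiv ℝ b x v := by
    intro x
    rw [fderiv_fun_mul (hda x) (hdb x)]
    simp only [ContinuousLinearMap.add_apply, ContinuousLinearMap.smul_apply, smul_eq_mul]
    ring
  have i1 : Integrable (fun x => fderiv ℝ a x v * b x) μ :=
    ((aux_cont_fderiv_apply _ ha v).mul hb.continuous).integrable_of_hasCompactSupport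
      ((aux_hcs_fderiv_apply hac v).mul_right)
  have i2 : Integrable (fun x => a x * fderiv ℝ b x v) μ :=
    (ha.continuous.mul (aux_cont_fderiv_apply _ hb v)).integrable_of_hasCompactSupport
      (hac.mul_right)
  have h0 : ∫ x, fderiv ℝ (fun y => a y * b y) x v ∂μ = 0 :=
    aux_integral_fderiv_complex _ (ha.mul hb) habc v
  rw [integral_congr_ae (Filter.Eventually.of_forall key), integral_add i1 i2] at h0
  exact eq_neg_of_add_eq_zero_left h0

end Aux

section Pointwise

/-- Skew-symmetric evaluation of an `ℝ`-linear map on `ℂ`. -/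
lemma skew_eval (L : ℂ →L[ℝ] ℂ) (a b : ℂ) :
    b * L a - a * L b
      = ((a.re * b.im - a.im * b.re : ℝ) : ℂ) * (Complex.I * L 1 - L Complex.I) := by
  have eL : ∀ x y : ℝ, L (↑x + ↑y * Complex.I) = ↑x * L 1 + ↑y * L Complex.I := by
    intro x y
    rw [show ((x : ℂ) + (y : ℂ) * Complex.I) = x • (1 : ℂ) + y • Complex.I by
      simp [Complex.real_smul], map_add, _root_.map_smul, _root_.map_smul]
    simp [Complex.real_smul]
  obtain ⟨a1, a2, ha⟩ : ∃ x y : ℝ, a = ↑x + ↑y * Complex.I :=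
    ⟨a.re, a.im, (Complex.re_add_im a).symm⟩
  obtain ⟨b1, b2, hb⟩ : ∃ x y : ℝ, b = ↑x + ↑y * Complex.I :=
    ⟨b.re, b.im, (Complex.re_add_im b).symm⟩
  subst ha hb
  rw [eL, eL]
  simp only [Complex.add_re, Complex.add_im, Complex.ofReal_re, Complex.ofReal_im,
    Complex.mul_re, Complex.mul_im, Complex.I_re, Complex.I_im]
  push_cast
  ring

variable (f : ℂ → ℝ) (hf : ContDiff ℝ (⊤ : ℕ∞) f)
include hf

/-- Smoothness of the Wirtinger derivative of a smooth function. -/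
lemma contDiff_wirtinger : ContDiff ℝ (⊤ : ℕ∞) (wirtingerDz fun z => (f z : ℂ)) := by
  have hF : ContDiff ℝ (⊤ : ℕ∞) (fun z : ℂ => (f z : ℂ)) := Complex.ofRealCLM.contDiff.comp hf
  have h1 : ContDiff ℝ (⊤ : ℕ∞) (fun z : ℂ => fderiv ℝ (fun w : ℂ => (f w : ℂ)) z 1) :=
    (hF.fderiv_right (by simp)).clm_apply contDiff_const
  have h2 : ContDiff ℝ (⊤ : ℕ∞) (fun z : ℂ => fderiv ℝ (fun w : ℂ => (f w : ℂ)) z Complex.I) :=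
    (hF.fderiv_right (by simp)).clm_apply contDiff_const
  exact (h1.sub (contDiff_const.mul h2)).div_const 2

/-- The derivative of the Wirtinger derivative, in terms of second derivatives of `f`. -/
lemma fderiv_wirtinger (z h : ℂ) :
    fderiv ℝ (wirtingerDz fun w => (f w : ℂ)) z h
      = (((fderiv ℝ (fun w => fderiv ℝ f w 1) z h : ℝ) : ℂ)
          - Complex.I * ((fderiv ℝ (fun w => fderiv ℝ f w Complex.I) z h : ℝ) : ℂ)) / 2 := by
  have hdf : Differentiable ℝ f := hf.differentiable (by simp)
  have hF : ∀ y : ℂ, fderiv ℝ (fun w : ℂ => (f w : ℂ)) y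
      = Complex.ofRealCLM.comp (fderiv ℝ f y) := fun y =>
    (Complex.ofRealCLM.hasFDerivAt.comp y (hdf y).hasFDerivAt).fderiv
  have hg1 : ContDiff ℝ (⊤ : ℕ∞) (fun w : ℂ => fderiv ℝ f w 1) :=
    (hf.fderiv_right (by simp)).clm_apply contDiff_const
  have hg2 : ContDiff ℝ (⊤ : ℕ∞) (fun w : ℂ => fderiv ℝ f w Complex.I) :=
    (hf.fderiv_right (by simp)).clm_apply contDiff_const
  have hw : (wirtingerDz fun w => (f w : ℂ))
      = fun z => (2⁻¹ : ℂ) * (((fderiv ℝ f z 1 : ℝ) : ℂ)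
          - Complex.I * ((fderiv ℝ f z Complex.I : ℝ) : ℂ)) := by
    funext y
    rw [wirtingerDz, hF y]
    simp
    ring
  rw [hw]
  have d1 : DifferentiableAt ℝ (fun z : ℂ => ((fderiv ℝ f z 1 : ℝ) : ℂ)) z :=
    (Complex.ofRealCLM.contDiff.comp hg1).differentiable (by simp) z
  have d2 : DifferentiableAt ℝ (fun z : ℂ => Complex.I * ((fderiv ℝ f z Complex.I : ℝ) : ℂ)) z :=
    ((Complex.ofRealCLM.contDiff.comp hg2).differentiable (by simp) z).const_mul _
  rw [fderiv_const_mul (d1.fun_sub d2)]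
  simp only [ContinuousLinearMap.coe_smul', Pi.smul_apply, smul_eq_mul]
  rw [fderiv_fun_sub d1 d2]
  simp only [ContinuousLinearMap.coe_sub', Pi.sub_apply]
  have d2' : DifferentiableAt ℝ (fun z : ℂ => ((fderiv ℝ f z Complex.I : ℝ) : ℂ)) z :=
    (Complex.ofRealCLM.contDiff.comp hg2).differentiable (by simp) z
  rw [fderiv_const_mul d2']
  simp only [ContinuousLinearMap.coe_smul', Pi.smul_apply, smul_eq_mul]
  rw [aux_fderiv_ofReal ((hg1.differentiable (by simp)) z) h,
    aux_fderiv_ofReal ((hg2.differentiable (by simp)) z) h]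
  ring

/-- The key constant: `i·L(1) − L(i) = i·Δf(z)/2` for `L` the derivative of the Wirtinger
derivative. -/
lemma wirtinger_key (z : ℂ) :
    Complex.I * fderiv ℝ (wirtingerDz fun w => (f w : ℂ)) z 1
        - fderiv ℝ (wirtingerDz fun w => (f w : ℂ)) z Complex.I
      = Complex.I * ((laplacian f z : ℝ) : ℂ) / 2 := by
  have hsymm : fderiv ℝ (fun w => fderiv ℝ f w 1) z Complex.I
      = fderiv ℝ (fun w => fderiv ℝ f w Complex.I) z 1 := by
    have hsnd : IsSymmSndFDerivAt ℝ f z := hf.contDiffAt.isSymmSndFDerivAt (by rw [minSmoothness_of_isRCLikeNormedField]; exact WithTop.coe_le_coe.mpr (le_top : (2 : ℕ∞) ≤ ⊤))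
    have hd : Differentiable ℝ (fderiv ℝ f) :=
      (hf.fderiv_right (m := (⊤ : ℕ∞)) (by simp)).differentiable (by simp)
    have e : ∀ u v : ℂ, fderiv ℝ (fun w => fderiv ℝ f w u) z v
        = fderiv ℝ (fderiv ℝ f) z v u := by
      intro u v
      rw [fderiv_clm_apply (hd z) (differentiableAt_const u)]
      simp
    rw [e, e, hsnd 1 Complex.I]
  rw [fderiv_wirtinger f hf, fderiv_wirtinger f hf, laplacian, hsymm]
  push_cast
  set A := fderiv ℝ (fun w => fderiv ℝ f w 1) z 1
  set B := fderiv ℝ (fun w => fderiv ℝ f w Complex.I) z 1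
  set D := fderiv ℝ (fun w => fderiv ℝ f w Complex.I) z Complex.I
  linear_combination (-(B : ℂ) / 2) * Complex.I_sq

end Pointwise

section Main

variable {n : ℕ}

lemma hq_smooth (p : Phase n → ℂ) (hp : ContDiff ℝ (⊤ : ℕ∞) p) (u : Phase n) :
    ContDiff ℝ (⊤ : ℕ∞) (fun σ => fderiv ℝ p σ u) :=
  (hp.fderiv_right (by simp)).clm_apply contDiff_const

lemma symm2 (p : Phase n → ℂ) (hp : ContDiff ℝ (⊤ : ℕ∞) p) (ρ u v : Phase n) :
    fderiv ℝ (fun σ => fderiv ℝ p σ u) ρ v = fderiv ℝ (fun σ => fderiv ℝ p σ v) ρ u := by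
  have hd : Differentiable ℝ (fderiv ℝ p) :=
    (hp.fderiv_right (m := (⊤ : ℕ∞)) (by simp)).differentiable (by simp)
  have e : ∀ u v : Phase n, fderiv ℝ (fun σ => fderiv ℝ p σ u) ρ v
      = fderiv ℝ (fderiv ℝ p) ρ v u := by
    intro u v
    rw [fderiv_clm_apply (hd ρ) (differentiableAt_const u)]
    simp
  rw [e, e, hp.contDiffAt.isSymmSndFDerivAt (by rw [minSmoothness_of_isRCLikeNormedField]; exact WithTop.coe_le_coe.mpr (le_top : (2 : ℕ∞) ≤ ⊤)) v u]

lemma pointwise_sum (p : Phase n → ℂ) (hp : ContDiff ℝ (⊤ : ℕ∞) p)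
    (f : ℂ → ℝ) (hf : ContDiff ℝ (⊤ : ℕ∞) f) (ρ : Phase n) :
    ∑ j : Fin n,
      (fderiv ℝ (fun σ => wirtingerDz (fun z => (f z : ℂ)) (p σ)
          * fderiv ℝ p σ (0, Pi.single j 1)) ρ (Pi.single j 1, 0)
        - fderiv ℝ (fun σ => wirtingerDz (fun z => (f z : ℂ)) (p σ)
          * fderiv ℝ p σ (Pi.single j 1, 0)) ρ (0, Pi.single j 1))
      = -(Complex.I / 2) * ((laplacian f (p ρ) : ℝ) : ℂ)
          * ((poissonBracketR (fun σ => (p σ).re) (fun σ => (p σ).im) ρ : ℝ) : ℂ) := by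
  set W := wirtingerDz (fun z => (f z : ℂ)) with hWdef
  have hW : ContDiff ℝ (⊤ : ℕ∞) W := contDiff_wirtinger f hf
  have hdp : Differentiable ℝ p := hp.differentiable (by simp)
  have hA : ContDiff ℝ (⊤ : ℕ∞) (fun σ => W (p σ)) := hW.comp hp
  have chain : ∀ v : Phase n,
      fderiv ℝ (fun σ => W (p σ)) ρ v = fderiv ℝ W (p ρ) (fderiv ℝ p ρ v) := by
    intro v
    rw [show (fun σ => W (p σ)) = W ∘ p from rfl,
      fderiv_comp ρ ((hW.differentiable (by simp)) (p ρ)) (hdp ρ)]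
    simp
  have prod_rule : ∀ u v : Phase n,
      fderiv ℝ (fun σ => W (p σ) * fderiv ℝ p σ u) ρ v
        = fderiv ℝ W (p ρ) (fderiv ℝ p ρ v) * fderiv ℝ p ρ u
          + W (p ρ) * fderiv ℝ (fun σ => fderiv ℝ p σ u) ρ v := by
    intro u v
    rw [fderiv_fun_mul ((hA.differentiable (by simp)) ρ)
      (((hq_smooth p hp u).differentiable (by simp)) ρ)]
    simp only [ContinuousLinearMap.add_apply, ContinuousLinearMap.smul_apply, smul_eq_mul]
    rw [chain v]
    ring
  have term_eq : ∀ j : Fin n,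
      (fderiv ℝ (fun σ => W (p σ) * fderiv ℝ p σ (0, Pi.single j 1)) ρ (Pi.single j 1, 0)
        - fderiv ℝ (fun σ => W (p σ) * fderiv ℝ p σ (Pi.single j 1, 0)) ρ (0, Pi.single j 1))
      = (((fderiv ℝ p ρ (Pi.single j 1, 0)).re * (fderiv ℝ p ρ (0, Pi.single j 1)).im
          - (fderiv ℝ p ρ (Pi.single j 1, 0)).im * (fderiv ℝ p ρ (0, Pi.single j 1)).re : ℝ) : ℂ)
          * (Complex.I * ((laplacian f (p ρ) : ℝ) : ℂ) / 2) := by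
    intro j
    rw [prod_rule, prod_rule,
      symm2 p hp ρ (0, Pi.single j 1) (Pi.single j 1, 0)]
    have : fderiv ℝ W (p ρ) (fderiv ℝ p ρ (Pi.single j 1, 0))
          * fderiv ℝ p ρ (0, Pi.single j 1)
        - fderiv ℝ W (p ρ) (fderiv ℝ p ρ (0, Pi.single j 1))
          * fderiv ℝ p ρ (Pi.single j 1, 0)
        = (((fderiv ℝ p ρ (Pi.single j 1, 0)).re * (fderiv ℝ p ρ (0, Pi.single j 1)).im
          - (fderiv ℝ p ρ (Pi.single j 1, 0)).im * (fderiv ℝ p ρ (0, Pi.single j 1)).re : ℝ) : ℂ)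
          * (Complex.I * fderiv ℝ W (p ρ) 1 - fderiv ℝ W (p ρ) Complex.I) := by
      have := skew_eval (fderiv ℝ W (p ρ)) (fderiv ℝ p ρ (Pi.single j 1, 0))
        (fderiv ℝ p ρ (0, Pi.single j 1))
      linear_combination this
    rw [← wirtinger_key f hf (p ρ)]
    linear_combination this
  rw [Finset.sum_congr rfl (fun j _ => term_eq j), ← Finset.sum_mul]
  have hR : poissonBracketR (fun σ => (p σ).re) (fun σ => (p σ).im) ρ
      = -∑ j : Fin n,
        ((fderiv ℝ p ρ (Pi.single j 1, 0)).re * (fderiv ℝ p ρ (0, Pi.single j 1)).im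
          - (fderiv ℝ p ρ (Pi.single j 1, 0)).im * (fderiv ℝ p ρ (0, Pi.single j 1)).re) := by
    rw [poissonBracketR, ← Finset.sum_neg_distrib]
    refine Finset.sum_congr rfl fun j _ => ?_
    rw [aux_fderiv_re (hdp ρ), aux_fderiv_re (hdp ρ), aux_fderiv_im (hdp ρ),
      aux_fderiv_im (hdp ρ)]
    ring
  rw [hR]
  push_cast
  ring

end Main

/-- Key identity (gc.5):
`2 Re( i ∫ (∂f/∂z)(p)·H_G p ) = ∫ (Δf)(p)·{Re p, Im p}·Re G`. -/
theorem key_identity_gc5 {n : ℕ} (p G : Phase n → ℂ) (f : ℂ → ℝ)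
    (hp : ContDiff ℝ (⊤ : ℕ∞) p) (hG : ContDiff ℝ (⊤ : ℕ∞) G) (hf : ContDiff ℝ (⊤ : ℕ∞) f)
    (hfc : HasCompactSupport f)
    (hfp : HasCompactSupport fun ρ => f (p ρ)) (hGc : HasCompactSupport G) :
    2 * (Complex.I * ∫ ρ : Phase n,
        wirtingerDz (fun z => (f z : ℂ)) (p ρ) * poissonBracketC G p ρ).re =
      ∫ ρ : Phase n, laplacian f (p ρ) *
        poissonBracketR (fun σ => (p σ).re) (fun σ => (p σ).im) ρ * (G ρ).re := by
  have hW : ContDiff ℝ (⊤ : ℕ∞) (wirtingerDz fun z => (f z : ℂ)) := contDiff_wirtinger f hf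
  have hA : ContDiff ℝ (⊤ : ℕ∞) (fun σ => wirtingerDz (fun z => (f z : ℂ)) (p σ)) := hW.comp hp
  have hAq : ∀ u : Phase n, ContDiff ℝ (⊤ : ℕ∞)
      (fun σ => wirtingerDz (fun z => (f z : ℂ)) (p σ) * fderiv ℝ p σ u) :=
    fun u => hA.mul (hq_smooth p hp u)
  -- integrability of the terms before integration by parts
  have int1 : ∀ (u v : Phase n), Integrable (fun ρ =>
      fderiv ℝ G ρ v * (wirtingerDz (fun z => (f z : ℂ)) (p ρ) * fderiv ℝ p ρ u)) :=
    fun u v => ((aux_cont_fderiv_apply G hG v).mul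
        ((hW.continuous.comp hp.continuous).mul (aux_cont_fderiv_apply p hp u)
        )).integrable_of_hasCompactSupport ((aux_hcs_fderiv_apply hGc v).mul_right)
  -- integrability of the terms after integration by parts
  have int2 : ∀ (u v : Phase n), Integrable (fun ρ => G ρ *
      fderiv ℝ (fun σ => wirtingerDz (fun z => (f z : ℂ)) (p σ) * fderiv ℝ p σ u) ρ v) :=
    fun u v => (hG.continuous.mul
        (aux_cont_fderiv_apply _ (hAq u) v)).integrable_of_hasCompactSupport
        hGc.mul_right
  -- the main computation with the integral
  have hI0 : (∫ ρ : Phase n, wirtingerDz (fun z => (f z : ℂ)) (p ρ) * poissonBracketC G p ρ)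
      = -(Complex.I/2) * ∫ ρ : Phase n, ((laplacian f (p ρ) *
          poissonBracketR (fun σ => (p σ).re) (fun σ => (p σ).im) ρ : ℝ) : ℂ) * G ρ := by
    calc ∫ ρ : Phase n, wirtingerDz (fun z => (f z : ℂ)) (p ρ) * poissonBracketC G p ρ
        = ∫ ρ : Phase n, ∑ j : Fin n,
            (fderiv ℝ G ρ (0, Pi.single j 1) * (wirtingerDz (fun z => (f z : ℂ)) (p ρ)
              * fderiv ℝ p ρ (Pi.single j 1, 0))
            - fderiv ℝ G ρ (Pi.single j 1, 0) * (wirtingerDz (fun z => (f z : ℂ)) (p ρ)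
              * fderiv ℝ p ρ (0, Pi.single j 1))) := by
          refine integral_congr_ae (Filter.Eventually.of_forall fun ρ => ?_)
          beta_reduce
          rw [poissonBracketC, Finset.mul_sum]
          exact Finset.sum_congr rfl fun j _ => by ring
      _ = ∑ j : Fin n, ((∫ ρ : Phase n, fderiv ℝ G ρ (0, Pi.single j 1)
              * (wirtingerDz (fun z => (f z : ℂ)) (p ρ) * fderiv ℝ p ρ (Pi.single j 1, 0)))
            - ∫ ρ : Phase n, fderiv ℝ G ρ (Pi.single j 1, 0)
              * (wirtingerDz (fun z => (f z : ℂ)) (p ρ) * fderiv ℝ p ρ (0, Pi.single j 1))) := by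
          exact (integral_finset_sum Finset.univ fun j _ =>
              ((int1 _ _).sub (int1 _ _))).trans
            (Finset.sum_congr rfl fun j _ => integral_sub (int1 _ _) (int1 _ _))
      _ = ∑ j : Fin n, ((∫ ρ : Phase n, G ρ * fderiv ℝ (fun σ =>
              wirtingerDz (fun z => (f z : ℂ)) (p σ) * fderiv ℝ p σ (0, Pi.single j 1)) ρ
                (Pi.single j 1, 0))
            - ∫ ρ : Phase n, G ρ * fderiv ℝ (fun σ =>
              wirtingerDz (fun z => (f z : ℂ)) (p σ) * fderiv ℝ p σ (Pi.single j 1, 0)) ρ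
                (0, Pi.single j 1)) := by
          refine Finset.sum_congr rfl fun j _ => ?_
          rw [aux_ibp G _ hG (hAq _) hGc (0, Pi.single j 1),
            aux_ibp G _ hG (hAq _) hGc (Pi.single j 1, 0)]
          ring
      _ = ∑ j : Fin n, ∫ ρ : Phase n,
            (G ρ * fderiv ℝ (fun σ =>
              wirtingerDz (fun z => (f z : ℂ)) (p σ) * fderiv ℝ p σ (0, Pi.single j 1)) ρ
                (Pi.single j 1, 0)
            - G ρ * fderiv ℝ (fun σ =>
              wirtingerDz (fun z => (f z : ℂ)) (p σ) * fderiv ℝ p σ (Pi.single j 1, 0)) ρ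
                (0, Pi.single j 1)) := by
          exact Finset.sum_congr rfl fun j _ => (integral_sub (int2 _ _) (int2 _ _)).symm
      _ = ∫ ρ : Phase n, ∑ j : Fin n,
            (G ρ * fderiv ℝ (fun σ =>
              wirtingerDz (fun z => (f z : ℂ)) (p σ) * fderiv ℝ p σ (0, Pi.single j 1)) ρ
                (Pi.single j 1, 0)
            - G ρ * fderiv ℝ (fun σ =>
              wirtingerDz (fun z => (f z : ℂ)) (p σ) * fderiv ℝ p σ (Pi.single j 1, 0)) ρ
                (0, Pi.single j 1)) :=
          (integral_finset_sum _ fun j _ => (int2 _ _).sub (int2 _ _)).symm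
      _ = ∫ ρ : Phase n, -(Complex.I/2) * (((laplacian f (p ρ) *
              poissonBracketR (fun σ => (p σ).re) (fun σ => (p σ).im) ρ : ℝ) : ℂ) * G ρ) := by
          refine integral_congr_ae (Filter.Eventually.of_forall fun ρ => ?_)
          beta_reduce
          have : ∑ j : Fin n,
              (G ρ * fderiv ℝ (fun σ =>
                wirtingerDz (fun z => (f z : ℂ)) (p σ) * fderiv ℝ p σ (0, Pi.single j 1)) ρ
                  (Pi.single j 1, 0)
              - G ρ * fderiv ℝ (fun σ =>
                wirtingerDz (fun z => (f z : ℂ)) (p σ) * fderiv ℝ p σ (Pi.single j 1, 0)) ρ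
                  (0, Pi.single j 1))
              = G ρ * ∑ j : Fin n,
              (fderiv ℝ (fun σ =>
                wirtingerDz (fun z => (f z : ℂ)) (p σ) * fderiv ℝ p σ (0, Pi.single j 1)) ρ
                  (Pi.single j 1, 0)
              - fderiv ℝ (fun σ =>
                wirtingerDz (fun z => (f z : ℂ)) (p σ) * fderiv ℝ p σ (Pi.single j 1, 0)) ρ
                  (0, Pi.single j 1)) := by
            rw [Finset.mul_sum]
            exact Finset.sum_congr rfl fun j _ => by ring
          rw [this, pointwise_sum p hp f hf ρ]
          push_cast
          ring
      _ = -(Complex.I/2) * ∫ ρ : Phase n, ((laplacian f (p ρ) *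
            poissonBracketR (fun σ => (p σ).re) (fun σ => (p σ).im) ρ : ℝ) : ℂ) * G ρ :=
          integral_const_mul _ _
  rw [hI0]
  -- now handle the constants and take real parts
  set Z := ∫ ρ : Phase n, ((laplacian f (p ρ) *
      poissonBracketR (fun σ => (p σ).re) (fun σ => (p σ).im) ρ : ℝ) : ℂ) * G ρ with hZ
  have h2 : Complex.I * (-(Complex.I/2) * Z) = ((2⁻¹ : ℝ) : ℂ) * Z := by
    push_cast
    linear_combination (-(Z)/2) * Complex.I_sq
  rw [h2, Complex.re_ofReal_mul]
  -- continuity facts for integrability of `Z`'s integrand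
  have hlap : Continuous fun z : ℂ => laplacian f z := by
    have hg1 : ContDiff ℝ (⊤ : ℕ∞) (fun w : ℂ => fderiv ℝ f w 1) :=
      (hf.fderiv_right (by simp)).clm_apply contDiff_const
    have hg2 : ContDiff ℝ (⊤ : ℕ∞) (fun w : ℂ => fderiv ℝ f w Complex.I) :=
      (hf.fderiv_right (by simp)).clm_apply contDiff_const
    simp only [laplacian]
    exact (aux_cont_fderiv_apply _ hg1 1).add (aux_cont_fderiv_apply _ hg2 Complex.I)
  have hRcont : Continuous fun ρ : Phase n =>
      poissonBracketR (fun σ => (p σ).re) (fun σ => (p σ).im) ρ := by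
    have hpre : ContDiff ℝ (⊤ : ℕ∞) fun σ : Phase n => (p σ).re := Complex.reCLM.contDiff.comp hp
    have hpim : ContDiff ℝ (⊤ : ℕ∞) fun σ : Phase n => (p σ).im := Complex.imCLM.contDiff.comp hp
    simp only [poissonBracketR]
    exact continuous_finset_sum _ fun j _ =>
      ((aux_cont_fderiv_apply _ hpre _).mul (aux_cont_fderiv_apply _ hpim _)).sub
        ((aux_cont_fderiv_apply _ hpre _).mul (aux_cont_fderiv_apply _ hpim _))
  have hZint : Integrable (fun ρ : Phase n => ((laplacian f (p ρ) *
      poissonBracketR (fun σ => (p σ).re) (fun σ => (p σ).im) ρ : ℝ) : ℂ) * G ρ) :=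
    ((Complex.continuous_ofReal.comp
        ((hlap.comp hp.continuous).mul hRcont)).mul hG.continuous
      ).integrable_of_hasCompactSupport hGc.mul_left
  have hZre : Z.re = ∫ ρ : Phase n, laplacian f (p ρ) *
      poissonBracketR (fun σ => (p σ).re) (fun σ => (p σ).im) ρ * (G ρ).re := by
    have h3 := Complex.reCLM.integral_comp_comm hZint
    simp only [Complex.reCLM_apply] at h3
    rw [hZ, ← h3]
    refine integral_congr_ae (Filter.Eventually.of_forall fun ρ => ?_)
    beta_reduce
    rw [Complex.re_ofReal_mul, mul_assoc]
  rw [hZre]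
  ring
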